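/- Theorem (variant with uniform monotonicity): a bibliometric index f satisfies uniform monotonicity, uniform citation, and uniform equivalence if and only if f is the rec-index. -/

import Mathlib

/-- A citation vector: a finite nonincreasing list of positive integers. -/
def CitVec (x : List ℕ) : Prop :=
  (∀ a ∈ x, 0 < a) ∧ List.Pairwise (· ≥ ·) x

/-- The rec-index: max over 1 ≤ i ≤ n of i·x_i (0 for the empty vector). -/
def recIdx (x : List ℕ) : ℕ :=
  ((List.range x.length).map (fun i => (i + 1) * x.getD i 0)).foldr max 0

/-- Domination: u ⊑ x. -/
def Dom (u x : List ℕ) : Prop :=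
  u.length ≤ x.length ∧ ∀ i < u.length, u.getD i 0 ≤ x.getD i 0

/-- Uniform: all entries equal. -/
def Uniform (x : List ℕ) : Prop := ∀ a ∈ x, ∀ b ∈ x, a = b

/-- x^[k]: add one citation to publication k (1-indexed; append a 1 if k = n+1). -/
def incr (x : List ℕ) (k : ℕ) : List ℕ :=
  if k ≤ x.length then x.set (k - 1) (x.getD (k - 1) 0 + 1) else x ++ [1]

/-- k is the smallest index j with x_j = x_k (taking x_{n+1} = 0);
equivalently all earlier entries are strictly larger. -/
def MinIndex (x : List ℕ) (k : ℕ) : Prop :=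
  1 ≤ k ∧ k ≤ x.length + 1 ∧ ∀ j, 1 ≤ j → j < k → x.getD (k - 1) 0 < x.getD (j - 1) 0

/-! If a uniform vector `(a, …, a)` of length `n` is dominated by `x`, then `a ≤ x_n`, so its
norm `n * a` is at most `n * x_n ≤ rec(x)`. Conversely, if `rec(x) = i * x_i`, the uniform vector
`(x_i, …, x_i)` of length `i` is dominated by `x` (which is nonincreasing) and has norm `rec(x)`.
Thus `rec(x)` is the largest norm of a uniform vector below `x`, and it is attained: UE and UC give
`f ≤ rec`, UM and UC give `f ≥ rec`, and `rec` itself satisfies all three axioms. -/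

open List

lemma List.foldr_max_bot_mem {α : Type*} [LinearOrder α] [OrderBot α] {l : List α}
    (h : l ≠ []) : l.foldr max ⊥ ∈ l :=
  maximum_mem (foldr_max_of_ne_nil h).symm

lemma le_recIdx {x : List ℕ} {i : ℕ} (hi : i < x.length) :
    (i + 1) * x.getD i 0 ≤ recIdx x :=
  le_max_of_le' 0 (mem_map.2 ⟨i, mem_range.2 hi, rfl⟩) le_rfl

lemma exists_recIdx_eq {x : List ℕ} (hx : x ≠ []) :
    ∃ i < x.length, recIdx x = (i + 1) * x.getD i 0 := by
  have hne : (range x.length).map (fun i => (i + 1) * x.getD i 0) ≠ [] := by simpa using hx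
  obtain ⟨i, hi, he⟩ := mem_map.1 (foldr_max_bot_mem hne)
  exact ⟨i, mem_range.1 hi, he.symm⟩

lemma recIdx_replicate (n a : ℕ) : recIdx (replicate n a) = n * a := by
  refine le_antisymm (max_le_of_forall_le _ _ ?_) ?_
  · simp only [mem_map, mem_range, length_replicate]
    rintro _ ⟨i, hi, rfl⟩
    simp only [getD_eq_getElem?_getD, getElem?_replicate, hi, if_true, Option.getD_some]
    exact Nat.mul_le_mul_right a hi
  · rcases Nat.eq_zero_or_pos n with rfl | hn
    · simp
    · simpa [getD_eq_getElem?_getD, Nat.sub_add_cancel hn, Nat.sub_lt hn one_pos] using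
        le_recIdx (x := replicate n a) (i := n - 1) (by simpa using Nat.sub_lt hn one_pos)

lemma Uniform.exists_eq_replicate {x : List ℕ} (hx : Uniform x) :
    ∃ n a, x = replicate n a := by
  cases x with
  | nil => exact ⟨0, 0, rfl⟩
  | cons b t => exact ⟨_, b, eq_replicate_iff.2 ⟨rfl, fun c hc => hx c hc b mem_cons_self⟩⟩

lemma uniform_replicate (n a : ℕ) : Uniform (replicate n a) := fun b hb c hc => by
  rw [eq_of_mem_replicate hb, eq_of_mem_replicate hc]

lemma citVec_replicate (n : ℕ) {a : ℕ} (ha : 0 < a) : CitVec (replicate n a) :=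
  ⟨fun _ hb => eq_of_mem_replicate hb ▸ ha, pairwise_replicate.2 (Or.inr le_rfl)⟩

lemma Uniform.recIdx_eq_sum {u : List ℕ} (hu : Uniform u) : recIdx u = u.sum := by
  obtain ⟨n, a, rfl⟩ := hu.exists_eq_replicate
  simp [recIdx_replicate]

lemma Uniform.sum_le_recIdx_of_dom {u x : List ℕ} (hu : Uniform u) (hux : Dom u x) :
    u.sum ≤ recIdx x := by
  obtain ⟨n, a, rfl⟩ := hu.exists_eq_replicate
  rcases Nat.eq_zero_or_pos n with rfl | hn
  · simp
  have hlen : n - 1 < x.length :=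
    (Nat.sub_lt hn one_pos).trans_le (by simpa using hux.1)
  have ha : a ≤ x.getD (n - 1) 0 := by
    simpa [getD_eq_getElem?_getD, Nat.sub_lt hn one_pos] using
      hux.2 (n - 1) (by simpa using Nat.sub_lt hn one_pos)
  calc (replicate n a).sum = n * a := by simp
    _ ≤ (n - 1 + 1) * x.getD (n - 1) 0 := by rw [Nat.sub_add_cancel hn]; gcongr
    _ ≤ recIdx x := le_recIdx hlen

lemma dom_replicate_getD {x : List ℕ} (hx : x.Pairwise (· ≥ ·)) {i : ℕ} (hi : i < x.length) :
    Dom (replicate (i + 1) (x.getD i 0)) x := by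
  refine ⟨by simpa using hi, fun j hj => ?_⟩
  rw [length_replicate] at hj
  simp only [getD_eq_getElem?_getD, getElem?_replicate, hj, if_true, Option.getD_some,
    getElem?_eq_getElem hi, getElem?_eq_getElem (hj.trans_le hi)]
  exact hx.rel_get_of_le (a := ⟨j, by omega⟩) (b := ⟨i, hi⟩) (Nat.lt_succ_iff.1 hj)

lemma CitVec.exists_uniform_dom_recIdx_eq_sum {x : List ℕ} (hx : CitVec x) :
    ∃ u, CitVec u ∧ Uniform u ∧ Dom u x ∧ recIdx x = u.sum := by
  rcases eq_or_ne x [] with rfl | hne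
  · exact ⟨[], by simp [CitVec], by simp [Uniform], by simp [Dom], rfl⟩
  obtain ⟨i, hi, he⟩ := exists_recIdx_eq hne
  have hpos : 0 < x.getD i 0 := hx.1 _ (by simp [getD_eq_getElem?_getD, getElem?_eq_getElem hi])
  exact ⟨_, citVec_replicate _ hpos, uniform_replicate _ _, dom_replicate_getD hx.2 hi,
    by simp [he]⟩

theorem rec_characterisation_UM_general (f : List ℕ → ℝ) :
    ((∀ x y, CitVec x → CitVec y → Uniform x → Dom x y → f x ≤ f y) ∧
     (∀ x, CitVec x → Uniform x → f x = x.sum) ∧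
     (∀ x, CitVec x → ∃ u, CitVec u ∧ Uniform u ∧ Dom u x ∧ f x = f u)) ↔
    (∀ x, CitVec x → f x = recIdx x) := by
  constructor
  · rintro ⟨hUM, hUC, hUE⟩ x hx
    obtain ⟨u, hu, huu, hux, hfu⟩ := hUE x hx
    obtain ⟨v, hv, hvu, hvx, hrec⟩ := hx.exists_uniform_dom_recIdx_eq_sum
    apply le_antisymm
    · rw [hfu, hUC u hu huu]
      exact_mod_cast huu.sum_le_recIdx_of_dom hux
    · rw [hrec, ← hUC v hv hvu]
      exact hUM v x hv hx hvu hvx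
  · intro hf
    refine ⟨fun x y hx hy hxu hxy => ?_, fun x hx hxu => ?_, fun x hx => ?_⟩
    · rw [hf x hx, hf y hy, hxu.recIdx_eq_sum]
      exact_mod_cast hxu.sum_le_recIdx_of_dom hxy
    · rw [hf x hx, hxu.recIdx_eq_sum]
    · obtain ⟨u, hu, huu, hux, hrec⟩ := hx.exists_uniform_dom_recIdx_eq_sum
      exact ⟨u, hu, huu, hux, by rw [hf x hx, hf u hu, hrec, huu.recIdx_eq_sum]⟩

theorem rec_characterisation_UM (f : List ℕ → ℝ)
    (hnonneg : ∀ x, CitVec x → 0 ≤ f x) (hbase : f [] = 0) :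
    ((∀ x y, CitVec x → CitVec y → Uniform x → Dom x y → f x ≤ f y) ∧
     (∀ x, CitVec x → Uniform x → f x = x.sum) ∧
     (∀ x, CitVec x → ∃ u, CitVec u ∧ Uniform u ∧ Dom u x ∧ f x = f u)) ↔
    (∀ x, CitVec x → f x = recIdx x) :=
  rec_characterisation_UM_general f
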